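/- arXiv:1611.08549 — 4 statements merged into one kernel-verified Lean document; each statement's English description precedes it below -/
import Mathlib

section
/- If np ≤ 1 − ε for some ε > 0, then the expected component size in G(n,p) satisfies E|C(v)| ≤ ε^{-1}. -/
/-!
Write `|C(v)| = ∑_w 1[v ↔ w]`. If `v ↔ w` in the percolated graph, some path of `G` from `v` to
`w` has all its edges open; a fixed path of length `k` is open with probability `p ^ k`, and a
graph of maximum degree `d` has at most `d ^ k` walks of length `k` from `v`. Hence
`E|C(v)| ≤ ∑_k (d p) ^ k`, the expected total progeny of a branching process with mean offspring
`d p`, which is at most `ε⁻¹` once `d p ≤ 1 - ε`. For `G(n,p)` take `d = n`.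
-/

open scoped Classical BigOperators
noncomputable section

/-- Number of vertices in the connected component of `v` in `G`. -/
def compSize {V : Type*} (G : SimpleGraph V) (v : V) : ℕ :=
  Nat.card {w | G.Reachable v w}

/-- `∑_i |C_i|^k`, the sum of `k`-th powers of the component sizes of `G`. -/
def sumPow {V : Type*} [Fintype V] (G : SimpleGraph V) (k : ℕ) : ℝ :=
  ∑ c : G.ConnectedComponent, (Nat.card c.supp : ℝ) ^ k

/-- Expectation, under bond percolation with parameter `p` on the finite graph `G`,
of a functional `f` of the resulting random subgraph. -/
def percExpect {V : Type*} [Fintype V] (G : SimpleGraph V) (p : ℝ)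
    (f : SimpleGraph V → ℝ) : ℝ :=
  ∑ H ∈ Finset.univ.filter (fun H : SimpleGraph V => H ≤ G),
    p ^ (Nat.card H.edgeSet) * (1 - p) ^ (Nat.card G.edgeSet - Nat.card H.edgeSet) * f H

/-- `S_n(p) = E[∑_i |C_i|^2]` for the Erdős–Rényi random graph `G(n,p)`. -/
def S (n : ℕ) (p : ℝ) : ℝ := percExpect (⊤ : SimpleGraph (Fin n)) p (fun H => sumPow H 2)

open Finset SimpleGraph

theorem Finset.sum_Icc_pow_mul_pow {α R : Type*} [DecidableEq α] [CommSemiring R]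
    {T E : Finset α} (hTE : T ⊆ E) (a b : R) :
    ∑ s ∈ Icc T E, a ^ #s * b ^ (#E - #s) = a ^ #T * (a + b) ^ (#E - #T) := by
  have hdisj : ∀ t ∈ (E \ T).powerset, Disjoint T t := fun t ht =>
    disjoint_of_subset_right (mem_powerset.1 ht) disjoint_sdiff
  rw [Icc_eq_image_powerset hTE, sum_image fun t ht t' ht' (h : T ∪ t = T ∪ t') => by
      rw [← union_sdiff_cancel_left (hdisj t ht), h, union_sdiff_cancel_left (hdisj t' ht')],
    ← card_sdiff_of_subset hTE, ← sum_pow_mul_eq_add_pow, mul_sum]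
  refine sum_congr rfl fun t ht => ?_
  have htE : #t ≤ #(E \ T) := card_le_card (mem_powerset.1 ht)
  rw [card_union_of_disjoint (hdisj t ht), card_sdiff_of_subset hTE, pow_add, mul_assoc]
  congr 3
  have := card_le_card hTE
  omega

theorem SimpleGraph.edgeSet_fromEdgeSet_of_subset {V : Type*} {G : SimpleGraph V}
    {s : Set (Sym2 V)} (hs : s ⊆ G.edgeSet) : (fromEdgeSet s).edgeSet = s :=
  (edgeSet_eq_iff _ _).2 ⟨rfl, Set.subset_compl_iff_disjoint_right.1
    (hs.trans G.edgeSet_subset_compl_diagSet)⟩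

theorem SimpleGraph.coe_subset_edgeSet_iff {V : Type*} {G : SimpleGraph V} [Fintype G.edgeSet]
    {s : Finset (Sym2 V)} : (s : Set (Sym2 V)) ⊆ G.edgeSet ↔ s ⊆ G.edgeFinset := by
  rw [← coe_edgeFinset, coe_subset]

section Percolation

variable {V : Type*} [Fintype V] (G : SimpleGraph V) (p : ℝ)

theorem percExpect_eq_sum_powerset (f : SimpleGraph V → ℝ) :
    percExpect G p f = ∑ s ∈ G.edgeFinset.powerset,
      p ^ #s * (1 - p) ^ (#G.edgeFinset - #s) * f (fromEdgeSet s) := by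
  refine sum_nbij' (fun H => H.edgeFinset) (fun s => fromEdgeSet s) ?_ ?_ ?_ ?_ ?_
  · intro H hH
    exact mem_powerset.2 (edgeFinset_mono (mem_filter.1 hH).2)
  · intro s hs
    exact mem_filter.2 ⟨mem_univ _, (fromEdgeSet_le G).2
      (Set.sdiff_subset.trans (coe_subset_edgeSet_iff.2 (mem_powerset.1 hs)))⟩
  · intro H _
    simp
  · intro s hs
    rw [← coe_inj, coe_edgeFinset,
      edgeSet_fromEdgeSet_of_subset (coe_subset_edgeSet_iff.2 (mem_powerset.1 hs))]
  · intro H _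
    simp [Nat.card_eq_fintype_card, edgeFinset_card]

theorem percExpect_ite_subset_edgeSet {T : Finset (Sym2 V)}
    (hT : (T : Set (Sym2 V)) ⊆ G.edgeSet) :
    percExpect G p (fun H => if (T : Set (Sym2 V)) ⊆ H.edgeSet then 1 else 0) = p ^ #T := by
  rw [percExpect_eq_sum_powerset]
  calc _ = ∑ s ∈ G.edgeFinset.powerset with T ⊆ s, p ^ #s * (1 - p) ^ (#G.edgeFinset - #s) := by
        rw [sum_filter]
        refine sum_congr rfl fun s hs => ?_
        rw [edgeSet_fromEdgeSet_of_subset (coe_subset_edgeSet_iff.2 (mem_powerset.1 hs)),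
          mul_ite, mul_one, mul_zero]
        exact if_congr coe_subset rfl rfl
    _ = p ^ #T := by
        rw [← Icc_eq_filter_powerset, sum_Icc_pow_mul_pow (coe_subset_edgeSet_iff.1 hT),
          add_sub_cancel, one_pow, mul_one]

theorem percExpect_sum {ι : Type*} (s : Finset ι) (f : ι → SimpleGraph V → ℝ) :
    percExpect G p (fun H => ∑ i ∈ s, f i H) = ∑ i ∈ s, percExpect G p (f i) := by
  simp only [percExpect, mul_sum]
  exact sum_comm

theorem percExpect_mono (hp₀ : 0 ≤ p) (hp₁ : p ≤ 1) {f g : SimpleGraph V → ℝ}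
    (hfg : ∀ H ≤ G, f H ≤ g H) : percExpect G p f ≤ percExpect G p g :=
  sum_le_sum fun H hH => mul_le_mul_of_nonneg_left (hfg H (mem_filter.1 hH).2)
    (mul_nonneg (pow_nonneg hp₀ _) (pow_nonneg (sub_nonneg.2 hp₁) _))

end Percolation

namespace SimpleGraph

variable {V : Type*} [Fintype V] (G : SimpleGraph V) [DecidableRel G.Adj]

theorem sum_card_finsetWalkLength_le {d : ℕ} (hd : ∀ u, G.degree u ≤ d) (k : ℕ) (u : V) :
    ∑ w, #(G.finsetWalkLength k u w) ≤ d ^ k := by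
  induction k generalizing u with
  | zero =>
    rw [sum_eq_single u (fun w _ hw => by simp [finsetWalkLength, Ne.symm hw]) (by simp)]
    simp [finsetWalkLength]
  | succ k ih =>
    calc ∑ w, #(G.finsetWalkLength (k + 1) u w)
        ≤ ∑ w, ∑ u' : G.neighborSet u, #(G.finsetWalkLength k u' w) := by
          refine sum_le_sum fun w _ => card_biUnion_le.trans_eq ?_
          simp only [card_map]
      _ = ∑ u' : G.neighborSet u, ∑ w, #(G.finsetWalkLength k u' w) := sum_comm
      _ ≤ ∑ _u' : G.neighborSet u, d ^ k := sum_le_sum fun u' _ => ih u'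
      _ ≤ d ^ (k + 1) := by
          rw [sum_const, card_univ, card_neighborSet_eq_degree, smul_eq_mul, pow_succ']
          exact Nat.mul_le_mul_right _ (hd u)

theorem ite_reachable_le_sum_path {H : SimpleGraph V} (hH : H ≤ G) (v w : V) :
    (if H.Reachable v w then (1 : ℝ) else 0) ≤
      ∑ q : G.Path v w, if (q : G.Walk v w).edgeSet ⊆ H.edgeSet then 1 else 0 := by
  have hnonneg : ∀ q ∈ (univ : Finset (G.Path v w)),
      (0 : ℝ) ≤ if (q : G.Walk v w).edgeSet ⊆ H.edgeSet then 1 else 0 :=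
    fun _ _ => by positivity
  split_ifs with hvw
  · obtain ⟨q⟩ := hvw
    let qG : G.Path v w := ⟨q.toPath.1.mapLe hH, q.toPath.2.mapLe hH⟩
    have hqG : (qG : G.Walk v w).edgeSet ⊆ H.edgeSet := fun e he =>
      q.toPath.1.edges_subset_edgeSet (by simpa [qG] using he)
    simpa [hqG] using single_le_sum hnonneg (mem_univ qG)
  · exact sum_nonneg hnonneg

theorem percExpect_reachable_le {p : ℝ} (hp₀ : 0 ≤ p) (hp₁ : p ≤ 1) (v w : V) :
    percExpect G p (fun H => if H.Reachable v w then 1 else 0) ≤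
      ∑ q : G.Path v w, p ^ (q : G.Walk v w).length :=
  calc _ ≤ percExpect G p (fun H =>
          ∑ q : G.Path v w, if (q : G.Walk v w).edgeSet ⊆ H.edgeSet then 1 else 0) :=
        percExpect_mono G p hp₀ hp₁ fun _ hH => G.ite_reachable_le_sum_path hH v w
    _ = ∑ q : G.Path v w, p ^ (q : G.Walk v w).length := by
        rw [percExpect_sum]
        refine sum_congr rfl fun q _ => ?_
        rw [← Walk.coe_edges_toFinset, percExpect_ite_subset_edgeSet, List.toFinset_card_of_nodup
          q.2.isTrail.edges_nodup, Walk.length_edges]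
        exact fun e he => (q : G.Walk v w).edges_subset_edgeSet (List.mem_toFinset.1 he)

theorem sum_path_pow_length_le {p : ℝ} (hp₀ : 0 ≤ p) (v w : V) :
    ∑ q : G.Path v w, p ^ (q : G.Walk v w).length ≤
      ∑ k ∈ range (Fintype.card V), #(G.finsetWalkLength k v w) * p ^ k :=
  calc _ = ∑ q ∈ univ.map (Function.Embedding.subtype (Walk.IsPath (G := G) (u := v) (v := w))),
        p ^ q.length := (sum_map _ _ _).symm
    _ ≤ ∑ q ∈ G.finsetWalkLengthLT (Fintype.card V) v w, p ^ q.length := by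
        refine sum_le_sum_of_subset_of_nonneg ?_ fun _ _ _ => pow_nonneg hp₀ _
        intro q hq
        obtain ⟨q, -, rfl⟩ := mem_map.1 hq
        exact mem_finsetWalkLengthLT_iff.2 q.2.length_lt
    _ = ∑ k ∈ range (Fintype.card V), ∑ q ∈ G.finsetWalkLength k v w, p ^ q.length :=
        sum_disjiUnion _ _ _
    _ = _ := sum_congr rfl fun k _ => by
        rw [sum_congr rfl fun q hq => by rw [mem_finsetWalkLength_iff.1 hq], sum_const,
          nsmul_eq_mul]

end SimpleGraph

theorem compSize_eq_sum {V : Type*} [Fintype V] (H : SimpleGraph V) (v : V) :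
    (compSize H v : ℝ) = ∑ w, if H.Reachable v w then 1 else 0 := by
  simp [compSize, sum_boole, Nat.card_eq_fintype_card, Fintype.card_subtype]

theorem percExpect_compSize_le {V : Type*} [Fintype V] (G : SimpleGraph V) [DecidableRel G.Adj]
    {p : ℝ} (hp₀ : 0 ≤ p) (hp₁ : p ≤ 1) {d : ℕ} (hd : ∀ u, G.degree u ≤ d) (v : V) :
    percExpect G p (fun H => (compSize H v : ℝ)) ≤ ∑ k ∈ range (Fintype.card V), (d * p) ^ k :=
  calc _ = ∑ w, percExpect G p (fun H => if H.Reachable v w then 1 else 0) := by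
        simp_rw [compSize_eq_sum]
        exact percExpect_sum G p _ _
    _ ≤ ∑ w, ∑ k ∈ range (Fintype.card V), #(G.finsetWalkLength k v w) * p ^ k :=
        sum_le_sum fun w _ =>
          (G.percExpect_reachable_le hp₀ hp₁ v w).trans (G.sum_path_pow_length_le hp₀ v w)
    _ = ∑ k ∈ range (Fintype.card V), ((∑ w, #(G.finsetWalkLength k v w) : ℕ) : ℝ) * p ^ k := by
        simp only [Nat.cast_sum, sum_mul]
        exact sum_comm
    _ ≤ ∑ k ∈ range (Fintype.card V), ((d ^ k : ℕ) : ℝ) * p ^ k := by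
        gcongr with k
        exact G.sum_card_finsetWalkLength_le hd k v
    _ = _ := by simp_rw [Nat.cast_pow, mul_pow]

theorem geom_sum_le_inv_of_le_one_sub {x ε : ℝ} (hx : 0 ≤ x) (hε : 0 < ε) (h : x ≤ 1 - ε)
    (n : ℕ) : ∑ k ∈ range n, x ^ k ≤ ε⁻¹ := by
  calc ∑ k ∈ range n, x ^ k ≤ x ^ 0 / (1 - x) := by
        rw [range_eq_Ico]
        exact geom_sum_Ico_le_of_lt_one hx (by linarith)
    _ ≤ ε⁻¹ := by
        rw [pow_zero, one_div]
        exact inv_anti₀ hε (by linarith)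

/-- Subcritical susceptibility bound for `G(n,p)`: if `np ≤ 1 − ε` with `ε > 0`, then
`E|C(v)| ≤ ε⁻¹`. -/
theorem subcritical_susceptibility (n : ℕ) (p : ℝ) (hp0 : 0 ≤ p) (hp1 : p ≤ 1)
    (ε : ℝ) (hε : 0 < ε) (h : (n : ℝ) * p ≤ 1 - ε) (v : Fin n) :
    percExpect (⊤ : SimpleGraph (Fin n)) p (fun H => (compSize H v : ℝ)) ≤ ε⁻¹ := by
  have hdeg : ∀ u, (⊤ : SimpleGraph (Fin n)).degree u ≤ n := fun u =>
    ((⊤ : SimpleGraph (Fin n)).degree_lt_card_verts u).le.trans_eq (Fintype.card_fin n)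
  calc _ ≤ ∑ k ∈ range n, ((n : ℝ) * p) ^ k := by
        simpa using percExpect_compSize_le ⊤ hp0 hp1 hdeg v
    _ ≤ ε⁻¹ := geom_sum_le_inv_of_le_one_sub (by positivity) hε h n
end
end

section
/- For every λ ≥ 0 and integer k ≥ 1, the total progeny T of a Galton–Watson process with Poisson(λ) offspring satisfies P(T = k) = e^{−λk}(λk)^{k−1}/k! ≤ e/(√(2π) k^{3/2}). -/
/-!
Write `T_j` for the total progeny of a forest grown from `j` roots. Splitting off the first
generation gives `T_j = j + T'_S`, where `S = ξ 0 0 + ⋯ + ξ 0 (j-1)` is Poisson(`jλ`) and `T'` is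
the total progeny of the forest grown, from `S` roots, out of the remaining rows of offspring
variables, which are independent of the first row. Hence `P(T_j = m)` satisfies a recursion in
`m`, and the Borel–Tanner law `(j/m) e^{-λm} (λm)^{m-j} / (m-j)!` solves it by the Abel-type
identity `∑ i (r choose i) x^i y^(r-i) = r x (x+y)^(r-1)`; taking `j = 1` gives the formula.
The bound follows from Stirling's `k! ≥ √(2πk) (k/e)^k` together with `λ e^{1-λ} ≤ 1`.
-/
open scoped Classical BigOperators ENNReal
open MeasureTheory ProbabilityTheory
noncomputable section

/-- Generation sizes of a Galton–Watson branching process started from a single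
individual, where `ξ n i` is the number of children of the `i`-th individual of
generation `n`. -/
def gwGen {Ω : Type*} (ξ : ℕ → ℕ → Ω → ℕ) : ℕ → Ω → ℕ
  | 0, _ => 1
  | n + 1, ω => ∑ i ∈ Finset.range (gwGen ξ n ω), ξ n i ω

/-- Total progeny (possibly infinite) of the Galton–Watson process with offspring
variables `ξ`. -/
def gwTotal {Ω : Type*} (ξ : ℕ → ℕ → Ω → ℕ) (ω : Ω) : ℕ∞ :=
  ∑' n, (gwGen ξ n ω : ℕ∞)

/-- `ξ` is a family of i.i.d. offspring variables with distribution given by the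
pmf `μ : ℕ → ℝ≥0∞` on the probability space `(Ω, P)`. -/
def IsGW {Ω : Type*} [MeasurableSpace Ω] (P : Measure Ω) (ξ : ℕ → ℕ → Ω → ℕ)
    (μ : ℕ → ℝ≥0∞) : Prop :=
  (∀ n i, Measurable (ξ n i)) ∧
  (∀ n i m, P {ω | ξ n i ω = m} = μ m) ∧
  iIndepFun (m := fun _ : ℕ × ℕ => (inferInstance : MeasurableSpace ℕ))
    (fun q : ℕ × ℕ => ξ q.1 q.2) P

/-- The `Binomial(n,p)` pmf on `ℕ`. -/
def binomialPMF (n : ℕ) (p : ℝ) (m : ℕ) : ℝ≥0∞ :=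
  ENNReal.ofReal ((n.choose m : ℝ) * p ^ m * (1 - p) ^ (n - m))

/-- The `Poisson(λ)` pmf on `ℕ`. -/
def poissonPMF' (lam : ℝ) (m : ℕ) : ℝ≥0∞ :=
  ENNReal.ofReal (Real.exp (-lam) * lam ^ m / m.factorial)

open Finset

lemma ENat.hasSum_iSup_sum {ι : Type*} (f : ι → ℕ∞) : HasSum f (⨆ s : Finset ι, ∑ i ∈ s, f i) :=
  hasSum_of_isLUB _ isLUB_iSup

lemma ENat.summable {ι : Type*} (f : ι → ℕ∞) : Summable f :=
  (ENat.hasSum_iSup_sum f).summable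

instance ENat.instBorelSpace : BorelSpace ℕ∞ := ⟨borel_eq_top_of_countable.symm⟩

lemma Measurable.enat_tsum {Ω ι : Type*} [MeasurableSpace Ω] [Countable ι] {f : ι → Ω → ℕ∞}
    (hf : ∀ i, Measurable (f i)) : Measurable fun ω ↦ ∑' i, f i ω := by
  simp_rw [fun ω ↦ (ENat.hasSum_iSup_sum (f · ω)).tsum_eq]
  exact .iSup fun s ↦ Finset.measurable_sum s fun i _ ↦ hf i

section Forest

variable {Ω : Type*}

def forestGen (ξ : ℕ → ℕ → Ω → ℕ) (j : ℕ) : ℕ → Ω → ℕ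
  | 0, _ => j
  | n + 1, ω => ∑ i ∈ range (forestGen ξ j n ω), ξ n i ω

def forestTotal (ξ : ℕ → ℕ → Ω → ℕ) (j : ℕ) (ω : Ω) : ℕ∞ :=
  ∑' n, (forestGen ξ j n ω : ℕ∞)

lemma gwGen_eq_forestGen_one (ξ : ℕ → ℕ → Ω → ℕ) : gwGen ξ = forestGen ξ 1 := by
  funext n ω
  induction n with
  | zero => rfl
  | succ n ih => simp only [gwGen, forestGen, ih]

lemma gwTotal_eq_forestTotal_one (ξ : ℕ → ℕ → Ω → ℕ) : gwTotal ξ = forestTotal ξ 1 := by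
  funext ω
  simp only [gwTotal, forestTotal, gwGen_eq_forestGen_one]

@[simp]
lemma forestGen_zero_roots (ξ : ℕ → ℕ → Ω → ℕ) (n : ℕ) (ω : Ω) : forestGen ξ 0 n ω = 0 := by
  induction n with
  | zero => rfl
  | succ n ih => simp [forestGen, ih]

@[simp]
lemma forestTotal_zero_roots (ξ : ℕ → ℕ → Ω → ℕ) (ω : Ω) : forestTotal ξ 0 ω = 0 := by
  simp [forestTotal]

lemma forestGen_succ (ξ : ℕ → ℕ → Ω → ℕ) (j n : ℕ) (ω : Ω) :
    forestGen ξ j (n + 1) ω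
      = forestGen (fun n ↦ ξ (n + 1)) (∑ s ∈ range j, ξ 0 s ω) n ω := by
  induction n with
  | zero => rfl
  | succ n ih => simp only [forestGen, ← ih]

lemma forestTotal_eq_add (ξ : ℕ → ℕ → Ω → ℕ) (j : ℕ) (ω : Ω) :
    forestTotal ξ j ω
      = j + forestTotal (fun n ↦ ξ (n + 1)) (∑ s ∈ range j, ξ 0 s ω) ω := by
  rw [forestTotal, tsum_eq_zero_add' (ENat.summable _)]
  simp only [forestGen_succ, forestTotal]
  rfl

variable {mΩ : MeasurableSpace Ω} {ξ : ℕ → ℕ → Ω → ℕ}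

lemma measurable_forestGen (hξ : ∀ n i, Measurable (ξ n i)) (j n : ℕ) :
    Measurable (forestGen ξ j n) := by
  induction n with
  | zero => exact measurable_const
  | succ n ih =>
    refine measurable_to_countable' fun c ↦ ?_
    have hfiber : forestGen ξ j (n + 1) ⁻¹' {c}
        = ⋃ d : ℕ, forestGen ξ j n ⁻¹' {d} ∩ {ω | ∑ i ∈ range d, ξ n i ω = c} := by
      ext ω
      simp [forestGen]
    rw [hfiber]
    exact .iUnion fun d ↦ (ih (measurableSet_singleton d)).inter
      (Finset.measurable_sum _ (fun i _ ↦ hξ n i) (measurableSet_singleton c))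

lemma measurable_forestTotal (hξ : ∀ n i, Measurable (ξ n i)) (j : ℕ) :
    Measurable (forestTotal ξ j) :=
  .enat_tsum fun n ↦ measurable_from_nat.comp (measurable_forestGen hξ j n)

end Forest

section IsGW

variable {Ω : Type*} {ξ : ℕ → ℕ → Ω → ℕ}

abbrev rowsSigma (ξ : ℕ → ℕ → Ω → ℕ) (S : Set ℕ) : MeasurableSpace Ω :=
  ⨆ q ∈ Prod.fst ⁻¹' S, MeasurableSpace.comap (ξ q.1 q.2) inferInstance

lemma measurable_rowsSigma {S : Set ℕ} {n : ℕ} (hn : n ∈ S) (i : ℕ) :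
    Measurable[rowsSigma ξ S] (ξ n i) :=
  measurable_iff_comap_le.mpr <|
    le_biSup (fun q : ℕ × ℕ ↦ MeasurableSpace.comap (ξ q.1 q.2) inferInstance)
      (show (n, i) ∈ Prod.fst ⁻¹' S from hn)

variable [MeasurableSpace Ω] {P : Measure Ω} {μ : ℕ → ℝ≥0∞}

lemma IsGW.measurable (hξ : IsGW P ξ μ) (n i : ℕ) : Measurable (ξ n i) := hξ.1 n i

lemma IsGW.measure_eq (hξ : IsGW P ξ μ) (n i m : ℕ) : P {ω | ξ n i ω = m} = μ m := hξ.2.1 n i m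

lemma IsGW.iIndepFun_offspring (hξ : IsGW P ξ μ) :
    iIndepFun (fun q : ℕ × ℕ ↦ ξ q.1 q.2) P :=
  hξ.2.2

lemma IsGW.shift (hξ : IsGW P ξ μ) : IsGW P (fun n ↦ ξ (n + 1)) μ :=
  ⟨fun n i ↦ hξ.measurable _ _, fun n i m ↦ hξ.measure_eq _ _ _,
    hξ.iIndepFun_offspring.precomp (g := fun q : ℕ × ℕ ↦ (q.1 + 1, q.2))
      fun a b h ↦ by simpa [Prod.ext_iff] using h⟩

lemma IsGW.iIndepFun_row (hξ : IsGW P ξ μ) (n : ℕ) : iIndepFun (ξ n) P :=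
  hξ.iIndepFun_offspring.precomp (g := fun i ↦ (n, i)) fun a b h ↦ by simpa using h

lemma IsGW.indep_rowsSigma (hξ : IsGW P ξ μ) {S T : Set ℕ} (hST : Disjoint S T) :
    Indep (rowsSigma ξ S) (rowsSigma ξ T) P := by
  have hle : ∀ q : ℕ × ℕ, MeasurableSpace.comap (ξ q.1 q.2) inferInstance ≤ ‹MeasurableSpace Ω› :=
    fun q ↦ measurable_iff_comap_le.mp (hξ.measurable q.1 q.2)
  exact indep_iSup_of_disjoint hle hξ.iIndepFun_offspring.iIndep (hST.preimage Prod.fst)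

end IsGW

lemma ENat.natCast_add_eq_natCast_iff {j m : ℕ} (hjm : j ≤ m) (x : ℕ∞) :
    (j : ℕ∞) + x = m ↔ x = (m - j : ℕ) := by
  induction x using ENat.recTopCoe with
  | top => exact iff_of_false (by simp) (ENat.top_ne_natCast _)
  | coe x => norm_cast; omega

section Recursion

variable {Ω : Type*} [MeasurableSpace Ω] {P : Measure Ω} {ξ : ℕ → ℕ → Ω → ℕ} {μ : ℕ → ℝ≥0∞}

lemma IsGW.measure_forestTotal_eq_tsum (hξ : IsGW P ξ μ) {j m : ℕ} (hjm : j ≤ m) :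
    P {ω | forestTotal ξ j ω = m}
      = ∑' i, P {ω | ∑ s ∈ range j, ξ 0 s ω = i}
          * P {ω | forestTotal (fun n ↦ ξ (n + 1)) i ω = (m - j : ℕ)} := by
  have hdecomp : {ω | forestTotal ξ j ω = m}
      = ⋃ i, {ω | ∑ s ∈ range j, ξ 0 s ω = i}
          ∩ {ω | forestTotal (fun n ↦ ξ (n + 1)) i ω = (m - j : ℕ)} := by
    ext ω
    rw [Set.mem_ofPred_eq, forestTotal_eq_add, ENat.natCast_add_eq_natCast_iff hjm]
    simp only [Set.mem_iUnion, Set.mem_inter_iff, Set.mem_ofPred_eq, exists_eq_left']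
  have hfirst : ∀ i, MeasurableSet[rowsSigma ξ {0}] {ω | ∑ s ∈ range j, ξ 0 s ω = i} := by
    intro i
    have h : Measurable[rowsSigma ξ {0}] fun ω ↦ ∑ s ∈ range j, ξ 0 s ω :=
      Finset.measurable_sum _ fun s _ ↦ measurable_rowsSigma (Set.mem_singleton 0) s
    exact h (measurableSet_singleton i)
  have hlater : ∀ i, MeasurableSet[rowsSigma ξ {0}ᶜ]
      {ω | forestTotal (fun n ↦ ξ (n + 1)) i ω = (m - j : ℕ)} :=
    fun i ↦ measurable_forestTotal (fun n s ↦ measurable_rowsSigma (Nat.succ_ne_zero n) s) i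
      (measurableSet_singleton _)
  rw [hdecomp, measure_iUnion]
  · exact tsum_congr fun i ↦ (Indep_iff _ _ _).mp (hξ.indep_rowsSigma disjoint_compl_right)
      _ _ (hfirst i) (hlater i)
  · intro a b hab
    exact Set.disjoint_left.mpr fun ω ha hb ↦ hab (ha.1.symm.trans hb.1)
  · exact fun i ↦ (Finset.measurable_sum _ (fun s _ ↦ hξ.measurable 0 s)
      (measurableSet_singleton i)).inter
      (measurable_forestTotal hξ.shift.measurable i (measurableSet_singleton _))

end Recursion

section Poisson

def poissonReal (lam : ℝ) (n : ℕ) : ℝ := Real.exp (-lam) * lam ^ n / n.factorial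

lemma poissonReal_nonneg {lam : ℝ} (hlam : 0 ≤ lam) (n : ℕ) : 0 ≤ poissonReal lam n := by
  unfold poissonReal; positivity

lemma poissonMeasure_zero : poissonMeasure 0 = Measure.dirac 0 :=
  Measure.ext_of_singleton fun n ↦ by
    cases n <;> simp [poissonMeasure_singleton]

lemma poissonMeasure_singleton_toNNReal {lam : ℝ} (hlam : 0 ≤ lam) (n : ℕ) :
    poissonMeasure lam.toNNReal {n} = ENNReal.ofReal (poissonReal lam n) := by
  rw [poissonMeasure_singleton, Real.coe_toNNReal _ hlam, poissonReal]

variable {Ω : Type*} [MeasurableSpace Ω] {P : Measure Ω} {ξ : ℕ → ℕ → Ω → ℕ} {lam : ℝ}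

lemma IsGW.hasLaw_poissonMeasure (hξ : IsGW P ξ (poissonPMF' lam)) (hlam : 0 ≤ lam) (n i : ℕ) :
    HasLaw (ξ n i) (poissonMeasure lam.toNNReal) P where
  aemeasurable := (hξ.measurable n i).aemeasurable
  map_eq := Measure.ext_of_singleton fun m ↦ by
    rw [Measure.map_apply (hξ.measurable n i) (measurableSet_singleton m),
      poissonMeasure_singleton_toNNReal hlam]
    exact hξ.measure_eq n i m

lemma IsGW.isProbabilityMeasure (hξ : IsGW P ξ (poissonPMF' lam)) (hlam : 0 ≤ lam) :
    IsProbabilityMeasure P :=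
  (hξ.hasLaw_poissonMeasure hlam 0 0).isProbabilityMeasure

lemma IsGW.hasLaw_sum_row (hξ : IsGW P ξ (poissonPMF' lam)) (hlam : 0 ≤ lam) (n c : ℕ) :
    HasLaw (∑ s ∈ range c, ξ n s) (poissonMeasure (c * lam.toNNReal)) P := by
  have := hξ.isProbabilityMeasure hlam
  induction c with
  | zero =>
    rw [sum_range_zero, Nat.cast_zero, zero_mul, poissonMeasure_zero]
    exact ⟨aemeasurable_const, by simp [Pi.zero_def, Measure.map_const]⟩
  | succ c ih =>
    rw [sum_range_succ, Nat.cast_succ, add_one_mul]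
    exact IndepFun.hasLaw_add_poissonMeasure
      ((hξ.iIndepFun_row n).indepFun_finsetSum_of_notMem (hξ.measurable n) notMem_range_self)
      ih (hξ.hasLaw_poissonMeasure hlam n c)

lemma IsGW.measure_sum_row_eq (hξ : IsGW P ξ (poissonPMF' lam)) (hlam : 0 ≤ lam) (n c i : ℕ) :
    P {ω | ∑ s ∈ range c, ξ n s ω = i} = ENNReal.ofReal (poissonReal (c * lam) i) := by
  have h := (hξ.hasLaw_sum_row hlam n c).measure_eq (p := (· = i)) (measurableSet_singleton i)
  simp only [Finset.sum_apply] at h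
  rw [h, ← poissonMeasure_singleton_toNNReal (by positivity), Real.toNNReal_mul (by positivity),
    Real.toNNReal_natCast]
  rfl

end Poisson

lemma sum_range_mul_choose_mul_pow {R : Type*} [CommSemiring R] (x y : R) (r : ℕ) :
    ∑ i ∈ range (r + 1), (i * r.choose i * x ^ i * y ^ (r - i) : R)
      = r * x * (x + y) ^ (r - 1) := by
  cases r with
  | zero => simp
  | succ s =>
    have hchoose (i : ℕ) :
        ((i : R) + 1) * (s + 1).choose (i + 1) = ((s : R) + 1) * s.choose i := by
      have h := congrArg (Nat.cast : ℕ → R) (Nat.add_one_mul_choose_eq s i)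
      push_cast at h
      rw [h, mul_comm]
    rw [sum_range_succ', add_pow, mul_sum]
    simp only [Nat.cast_zero, zero_mul, add_zero, Nat.add_sub_add_right, add_tsub_cancel_right]
    refine sum_congr rfl fun i _ ↦ ?_
    push_cast
    rw [hchoose]
    ring

section BorelTanner

def borelTanner (lam : ℝ) (j m : ℕ) : ℝ :=
  if j ≤ m then (if m = 0 then 1 else j / m * poissonReal (lam * m) (m - j)) else 0

lemma borelTanner_nonneg {lam : ℝ} (hlam : 0 ≤ lam) (j m : ℕ) : 0 ≤ borelTanner lam j m := by
  unfold borelTanner poissonReal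
  split_ifs <;> positivity

lemma borelTanner_of_lt (lam : ℝ) {j m : ℕ} (h : m < j) : borelTanner lam j m = 0 := by
  simp [borelTanner, not_le.mpr h]

lemma borelTanner_one_left (lam : ℝ) {k : ℕ} (hk : 1 ≤ k) :
    borelTanner lam 1 k = Real.exp (-(lam * k)) * (lam * k) ^ (k - 1) / k.factorial := by
  have hfac : (k : ℝ) * (k - 1).factorial = k.factorial := by
    exact_mod_cast Nat.mul_factorial_pred (by omega)
  rw [borelTanner, if_pos hk, if_neg (by omega), poissonReal, ← hfac]
  push_cast
  ring

lemma poissonReal_mul_borelTanner (lam : ℝ) (j : ℕ) {i r : ℕ} (hir : i ≤ r) (hr : r ≠ 0) :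
    poissonReal (j * lam) i * borelTanner lam i r
      = Real.exp (-(lam * (j + r))) * lam ^ r / (r * r.factorial)
          * (i * r.choose i * (j : ℝ) ^ i * (r : ℝ) ^ (r - i)) := by
  have hfac : (r.choose i : ℝ) * i.factorial * (r - i).factorial = r.factorial := by
    exact_mod_cast Nat.choose_mul_factorial_mul_factorial hir
  have hpow : lam ^ i * lam ^ (r - i) = lam ^ r := by rw [← pow_add, Nat.add_sub_cancel' hir]
  have hexp : Real.exp (-(j * lam)) * Real.exp (-(lam * r)) = Real.exp (-(lam * (j + r))) := by
    rw [← Real.exp_add]; ring_nf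
  rw [borelTanner, if_pos hir, if_neg hr, poissonReal, poissonReal, ← hexp, ← hpow, ← hfac]
  have : (r : ℝ) ≠ 0 := by exact_mod_cast hr
  have : (r.choose i : ℝ) ≠ 0 := by exact_mod_cast (Nat.choose_pos hir).ne'
  field_simp
  ring

lemma borelTanner_eq_sum (lam : ℝ) {j m : ℕ} (hj : 1 ≤ j) (hjm : j ≤ m) :
    borelTanner lam j m
      = ∑ i ∈ range (m - j + 1), poissonReal (j * lam) i * borelTanner lam i (m - j) := by
  obtain ⟨r, rfl⟩ := Nat.exists_eq_add_of_le hjm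
  rw [Nat.add_sub_cancel_left]
  rcases Nat.eq_zero_or_pos r with rfl | hr
  · have hj0 : j ≠ 0 := by omega
    have hj0' : (j : ℝ) ≠ 0 := by exact_mod_cast hj0
    simp [borelTanner, poissonReal, hj0, hj0', mul_comm]
  rw [sum_congr rfl fun i hi ↦ poissonReal_mul_borelTanner lam j
    (Nat.lt_succ_iff.mp (mem_range.mp hi)) hr.ne', ← mul_sum, sum_range_mul_choose_mul_pow]
  have hm : ((j + r : ℕ) : ℝ) ≠ 0 := by exact_mod_cast (by omega : j + r ≠ 0)
  have : (r : ℝ) ≠ 0 := by exact_mod_cast hr.ne'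
  have hpow : ((j : ℝ) + r) ^ r = (j + r) * (j + r) ^ (r - 1) := by
    rw [← pow_succ', Nat.sub_add_cancel hr]
  rw [borelTanner, if_pos hjm, if_neg (by omega), poissonReal, Nat.add_sub_cancel_left]
  push_cast at hm ⊢
  rw [mul_pow, hpow]
  field_simp

end BorelTanner

section Bound

open Real

lemma mul_exp_one_sub_le_one (lam : ℝ) : lam * exp (1 - lam) ≤ 1 := by
  have h : lam ≤ exp (lam - 1) := by linarith [add_one_le_exp (lam - 1)]
  calc lam * exp (1 - lam) ≤ exp (lam - 1) * exp (1 - lam) := by gcongr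
    _ = 1 := by rw [← exp_add]; simp

lemma exp_neg_mul_mul_pow_le {lam : ℝ} (hlam : 0 ≤ lam) (n : ℕ) :
    exp (-(lam * (n + 1))) * (lam * (n + 1)) ^ n ≤ (n + 1) ^ n * exp (-n) := by
  have hexp : exp (-(lam * (n + 1))) = exp (1 - lam) ^ n * exp (-lam) * exp (-n) := by
    rw [← exp_nat_mul, ← exp_add, ← exp_add]; ring_nf
  calc exp (-(lam * (n + 1))) * (lam * (n + 1)) ^ n
      = (lam * exp (1 - lam)) ^ n * exp (-lam) * ((n + 1) ^ n * exp (-n)) := by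
        rw [hexp, mul_pow, mul_pow]; ring
    _ ≤ 1 * 1 * ((n + 1) ^ n * exp (-n)) := by
        gcongr
        · exact pow_le_one₀ (by positivity) (mul_exp_one_sub_le_one lam)
        · exact exp_le_one_iff.mpr (by linarith)
    _ = (n + 1) ^ n * exp (-n) := by ring

lemma pow_mul_exp_neg_div_factorial_le (n : ℕ) :
    ((n : ℝ) + 1) ^ n * exp (-n) / (n + 1).factorial
      ≤ exp 1 / (√(2 * π) * ((n : ℝ) + 1) ^ ((3 : ℝ) / 2)) := by
  have hstirling := Stirling.le_factorial_stirling (n + 1)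
  push_cast at hstirling
  have hrpow : ((n : ℝ) + 1) ^ ((3 : ℝ) / 2) = (n + 1) * √(n + 1) := by
    rw [show (3 : ℝ) / 2 = 1 + 1 / 2 by norm_num, rpow_add (by positivity), rpow_one,
      ← sqrt_eq_rpow]
  have hsqrt : √(2 * π * (n + 1)) = √(2 * π) * √(n + 1) := sqrt_mul (by positivity) _
  have hpow : (((n : ℝ) + 1) / exp 1) ^ (n + 1) = (n + 1) ^ n * exp (-n) * ((n + 1) / exp 1) := by
    rw [div_pow, pow_succ, pow_succ, exp_neg, ← exp_one_pow]
    field_simp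
  rw [div_le_div_iff₀ (by positivity) (by positivity)]
  calc ((n : ℝ) + 1) ^ n * exp (-n) * (√(2 * π) * ((n : ℝ) + 1) ^ ((3 : ℝ) / 2))
      = exp 1 * (√(2 * π * (n + 1)) * (((n : ℝ) + 1) / exp 1) ^ (n + 1)) := by
        rw [hrpow, hsqrt, hpow]
        field_simp
    _ ≤ exp 1 * (n + 1).factorial := by gcongr

end Bound

section Progeny

variable {Ω : Type*} [MeasurableSpace Ω] {P : Measure Ω} {ξ : ℕ → ℕ → Ω → ℕ} {lam : ℝ}

theorem IsGW.measure_forestTotal_eq_borelTanner (hξ : IsGW P ξ (poissonPMF' lam))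
    (hlam : 0 ≤ lam) (j m : ℕ) :
    P {ω | forestTotal ξ j ω = m} = ENNReal.ofReal (borelTanner lam j m) := by
  induction m using Nat.strong_induction_on generalizing ξ j with
  | _ m ih =>
  have := hξ.isProbabilityMeasure hlam
  rcases Nat.eq_zero_or_pos j with rfl | hj
  · rcases Nat.eq_zero_or_pos m with rfl | hm
    · simp [borelTanner]
    · simp [borelTanner, hm.ne', eq_comm (a := (0 : ℕ∞))]
  rcases lt_or_ge m j with hmj | hjm
  · have hempty : {ω | forestTotal ξ j ω = m} = ∅ :=
      Set.eq_empty_of_forall_notMem fun ω h ↦ by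
        have := (le_self_add.trans_eq (forestTotal_eq_add ξ j ω).symm).trans_eq h
        exact absurd (Nat.cast_le.mp this) (not_le.mpr hmj)
    rw [hempty, borelTanner_of_lt lam hmj, measure_empty, ENNReal.ofReal_zero]
  rw [hξ.measure_forestTotal_eq_tsum hjm]
  have hmul (i : ℕ) :
      ENNReal.ofReal (poissonReal (j * lam) i) * ENNReal.ofReal (borelTanner lam i (m - j))
        = ENNReal.ofReal (poissonReal (j * lam) i * borelTanner lam i (m - j)) :=
    (ENNReal.ofReal_mul (poissonReal_nonneg (by positivity) i)).symm
  simp_rw [hξ.measure_sum_row_eq hlam 0 j, ih (m - j) (by omega) hξ.shift, hmul]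
  rw [tsum_eq_sum (s := range (m - j + 1)) fun i hi ↦ by
      rw [borelTanner_of_lt lam (by simpa using hi), mul_zero, ENNReal.ofReal_zero],
    ← ENNReal.ofReal_sum_of_nonneg fun i _ ↦
      mul_nonneg (poissonReal_nonneg (by positivity) _) (borelTanner_nonneg hlam _ _),
    borelTanner_eq_sum lam hj hjm]

end Progeny

theorem gw_poisson_total_progeny_eq_and_bound_general
    {Ω : Type*} [MeasurableSpace Ω] (P : Measure Ω)
    (lam : ℝ) (hlam : 0 ≤ lam)
    (ξ : ℕ → ℕ → Ω → ℕ) (hξ : IsGW P ξ (poissonPMF' lam))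
    (k : ℕ) (hk : 1 ≤ k) :
    (P {ω | gwTotal ξ ω = (k : ℕ∞)}).toReal
        = Real.exp (-(lam * k)) * (lam * k) ^ (k - 1) / k.factorial ∧
      Real.exp (-(lam * k)) * (lam * k) ^ (k - 1) / k.factorial
        ≤ Real.exp 1 / (Real.sqrt (2 * Real.pi) * (k : ℝ) ^ ((3 : ℝ) / 2)) := by
  refine ⟨?_, ?_⟩
  · rw [gwTotal_eq_forestTotal_one, hξ.measure_forestTotal_eq_borelTanner hlam,
      ENNReal.toReal_ofReal (borelTanner_nonneg hlam 1 k), borelTanner_one_left lam hk]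
  · obtain ⟨n, rfl⟩ := Nat.exists_eq_add_of_le' hk
    rw [Nat.add_sub_cancel]
    push_cast
    exact (div_le_div_of_nonneg_right (exp_neg_mul_mul_pow_le hlam n) (by positivity)).trans
      (pow_mul_exp_neg_div_factorial_le n)

/-- Otter–Dwass formula and bound: for a Galton–Watson process with `Poisson(λ)`
offspring (`λ ≥ 0`) and every `k ≥ 1`,
`P(T = k) = e^{−λk}(λk)^{k−1}/k! ≤ e/(√(2π) k^{3/2})`. -/
theorem gw_poisson_total_progeny_eq_and_bound
    {Ω : Type*} [MeasurableSpace Ω] (P : Measure Ω) [IsProbabilityMeasure P]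
    (lam : ℝ) (hlam : 0 ≤ lam)
    (ξ : ℕ → ℕ → Ω → ℕ) (hξ : IsGW P ξ (poissonPMF' lam))
    (k : ℕ) (hk : 1 ≤ k) :
    (P {ω | gwTotal ξ ω = (k : ℕ∞)}).toReal
        = Real.exp (-(lam * k)) * (lam * k) ^ (k - 1) / k.factorial ∧
      Real.exp (-(lam * k)) * (lam * k) ^ (k - 1) / k.factorial
        ≤ Real.exp 1 / (Real.sqrt (2 * Real.pi) * (k : ℝ) ^ ((3 : ℝ) / 2)) :=
  gw_poisson_total_progeny_eq_and_bound_general P lam hlam ξ hξ k hk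
end
end

section
/- Let ρ(ε) > 0 be the positive solution of 1 − ρ = e^{−(1+ε)ρ}. Then for every ε > 0, (1 − ρ(ε))(1 + ε) < 1; moreover, for every A > 0 there exist δ ∈ (0,1/2) and c > 0 such that (1 − (1−δ)ρ(ε))·(1+ε) ≤ 1 − cε for all ε ∈ (0, A]. -/
/-- Key inequality: if `0 < ρ` and `1 - ρ = exp (-((1+ε)ρ))` with `ε > 0`, then
`(1 - ρ)(1 + ε) ≤ 1 - ρ/2`. -/
lemma survival_key (ε r : ℝ) (hε : 0 < ε) (hr : 0 < r)
    (heq : 1 - r = Real.exp (-((1 + ε) * r))) :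
    (1 - r) * (1 + ε) ≤ 1 - r / 2 := by
  have h1 : (0:ℝ) < 1 - r := heq ▸ Real.exp_pos _
  have hx : 0 < (1 + ε) * r := by positivity
  have hs : (1 + ε) * r ≤ Real.sinh ((1 + ε) * r) := Real.self_le_sinh_iff.mpr hx.le
  rw [Real.sinh_eq] at hs
  have hexpneg : Real.exp (-((1 + ε) * r)) = 1 - r := heq.symm
  have hexp : Real.exp ((1 + ε) * r) = (1 - r)⁻¹ := by
    rw [← hexpneg, Real.exp_neg, inv_inv]
  rw [hexp, hexpneg] at hs
  have hinv : (1 - r) * (1 - r)⁻¹ = 1 := mul_inv_cancel₀ h1.ne'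
  nlinarith [hs, hinv, mul_pos h1 hr]

/-- Let `ρ(ε) > 0` solve `1 − ρ = e^{−(1+ε)ρ}`. Then `(1 − ρ(ε))(1 + ε) < 1` for all
`ε > 0`, and for every `A > 0` there are `δ ∈ (0,1/2)` and `c > 0` with
`(1 − (1−δ)ρ(ε))(1+ε) ≤ 1 − cε` for all `ε ∈ (0, A]`. -/
theorem survival_probability_bounds (ρ : ℝ → ℝ)
    (hρ : ∀ ε : ℝ, 0 < ε → 0 < ρ ε ∧ 1 - ρ ε = Real.exp (-((1 + ε) * ρ ε))) :
    (∀ ε : ℝ, 0 < ε → (1 - ρ ε) * (1 + ε) < 1) ∧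
      (∀ A : ℝ, 0 < A → ∃ δ : ℝ, 0 < δ ∧ δ < 1 / 2 ∧ ∃ c : ℝ, 0 < c ∧
        ∀ ε : ℝ, 0 < ε → ε ≤ A → (1 - (1 - δ) * ρ ε) * (1 + ε) ≤ 1 - c * ε) := by
  constructor
  · intro ε hε
    obtain ⟨hpos, heq⟩ := hρ ε hε
    have := survival_key ε (ρ ε) hε hpos heq
    linarith
  · intro A hA
    have hB : (0:ℝ) < 1 + A := by linarith
    refine ⟨1 / (8 * (1 + A)), by positivity, ?_, 3 / (8 * (1 + A)), by positivity, ?_⟩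
    · rw [div_lt_div_iff₀ (by positivity) (by norm_num)]
      nlinarith
    · intro ε hε hεA
      obtain ⟨hpos, heq⟩ := hρ ε hε
      have hkey := survival_key ε (ρ ε) hε hpos heq
      -- lower bound on ρ ε : ε ≤ ρ ε * (1 + A)
      have hrlow : ε ≤ ρ ε * (1 + A) := by nlinarith
      have hδε : (1 / (8 * (1 + A))) * (1 + ε) ≤ 1 / 8 := by
        rw [div_mul_eq_mul_div, div_le_div_iff₀ (by positivity) (by norm_num)]
        nlinarith
      have hδρ : (1 / (8 * (1 + A))) * ρ ε * (1 + ε) ≤ ρ ε / 8 := by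
        have := mul_le_mul_of_nonneg_right hδε hpos.le
        nlinarith
      have h38 : 3 / (8 * (1 + A)) * ε ≤ 3 / 8 * ρ ε := by
        rw [div_mul_eq_mul_div, div_le_iff₀ (by positivity)]
        nlinarith
      have expand : (1 - (1 - 1 / (8 * (1 + A))) * ρ ε) * (1 + ε)
          = (1 - ρ ε) * (1 + ε) + (1 / (8 * (1 + A))) * ρ ε * (1 + ε) := by ring
      linarith [expand ▸ add_le_add hkey hδρ]
end

section
/- For all integers k ≥ 2 and ℓ ≥ 1, I_{k,ℓ} = (1/3)·6^{k/3+(ℓ−1)/2}·Γ(k/3+(ℓ−1)/2) satisfies I_{k,ℓ} ≤ 2√π · (3ℓ)^{k/3−1} · (3ℓ/e)^{ℓ/2} · e^{2k²/(9ℓ)}. -/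
open Real

private lemma fact_log_le' (n : ℕ) (hn : 1 ≤ n) :
    Real.log (Nat.factorial n) ≤ 1 + ((n : ℝ) + 1/2) * Real.log n - n := by
  have h1 : Stirling.stirlingSeq n ≤ Real.exp 1 / Real.sqrt 2 := by
    obtain ⟨m, rfl⟩ := Nat.exists_eq_add_of_le hn
    have := Stirling.stirlingSeq'_antitone (Nat.zero_le m)
    simpa [Nat.add_comm] using this
  have hnp : (0:ℝ) < n := by exact_mod_cast hn
  have hd : (0:ℝ) < Real.sqrt (2 * n) * ((n : ℝ) / Real.exp 1) ^ n := by
    positivity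
  have h2 : ((Nat.factorial n) : ℝ) ≤ Real.exp 1 / Real.sqrt 2 * (Real.sqrt (2 * n) * ((n : ℝ) / Real.exp 1) ^ n) := by
    have := Stirling.stirlingSeq n
    rw [Stirling.stirlingSeq] at h1
    calc ((Nat.factorial n) : ℝ) = ((Nat.factorial n) : ℝ) / (Real.sqrt (2 * n) * ((n:ℝ) / Real.exp 1) ^ n) * (Real.sqrt (2 * n) * ((n:ℝ) / Real.exp 1) ^ n) := by field_simp
      _ ≤ _ := by gcongr <;> simp_all
  have h3 : Real.exp 1 / Real.sqrt 2 * (Real.sqrt (2 * n) * ((n : ℝ) / Real.exp 1) ^ n)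
      = Real.exp 1 * Real.sqrt n * ((n : ℝ) / Real.exp 1) ^ n := by
    rw [show (2 * (n:ℝ)) = 2 * n by ring, Real.sqrt_mul (by norm_num)]
    field_simp
  rw [h3] at h2
  have h4 := Real.log_le_log (by positivity) h2
  calc Real.log ((Nat.factorial n)) ≤ Real.log (Real.exp 1 * Real.sqrt n * ((n:ℝ)/Real.exp 1) ^ n) := h4
    _ = 1 + (1/2) * Real.log n + n * (Real.log n - 1) := by
        rw [Real.log_mul (by positivity) (by positivity), Real.log_mul (by positivity) (by positivity),
          Real.log_exp, Real.log_pow, Real.log_div (by positivity) (by positivity), Real.log_exp,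
          Real.log_sqrt (le_of_lt hnp)]
        ring
    _ = 1 + ((n:ℝ) + 1/2) * Real.log n - n := by ring

private lemma defect' (a t : ℝ) (ha : 1 ≤ a) (ht0 : 0 ≤ t) (ht1 : t ≤ 1) :
    (1-t)*((a+1/2)*Real.log a) + t*((a+1+1/2)*Real.log (a+1))
      ≤ (a+t+1/2)*Real.log (a+t) + 1/4 := by
  have hs : (0:ℝ) < a + t := by linarith
  have ha0 : (0:ℝ) < a := by linarith
  have h1 : Real.log a - Real.log (a+t) ≤ a/(a+t) - 1 := by
    have := Real.log_le_sub_one_of_pos (show (0:ℝ) < a/(a+t) by positivity)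
    rwa [Real.log_div (by positivity) (by positivity)] at this
  have h2 : Real.log (a+1) - Real.log (a+t) ≤ (a+1)/(a+t) - 1 := by
    have := Real.log_le_sub_one_of_pos (show (0:ℝ) < (a+1)/(a+t) by positivity)
    rwa [Real.log_div (by positivity) (by positivity)] at this
  have c1 : (0:ℝ) ≤ (1-t)*(a+1/2) := by nlinarith
  have c2 : (0:ℝ) ≤ t*(a+3/2) := by nlinarith
  have key : (1-t)*(a+1/2)*(Real.log a - Real.log (a+t))
      + t*(a+3/2)*(Real.log (a+1) - Real.log (a+t))
      ≤ (1-t)*(a+1/2)*(a/(a+t)-1) + t*(a+3/2)*((a+1)/(a+t)-1) :=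
    add_le_add (mul_le_mul_of_nonneg_left h1 c1) (mul_le_mul_of_nonneg_left h2 c2)
  have hval : (1-t)*(a+1/2)*(a/(a+t)-1) + t*(a+3/2)*((a+1)/(a+t)-1) = t*(1-t)/(a+t) := by
    field_simp
    ring
  have hfin : t*(1-t)/(a+t) ≤ 1/4 := by
    rw [div_le_iff₀ hs]
    nlinarith [sq_nonneg (t - 1/2)]
  nlinarith [key, hval, hfin]

private lemma gamma_le (m : ℝ) (hm : 1 ≤ m) :
    Real.Gamma m ≤ Real.exp (5/4 + (m - 1/2) * Real.log m - m) := by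
  set n : ℕ := ⌊m⌋₊ with hn
  have hn1 : 1 ≤ n := Nat.le_floor (by exact_mod_cast hm)
  have hna : (1:ℝ) ≤ (n:ℝ) := by exact_mod_cast hn1
  set t : ℝ := m - n with htdef
  have ht0 : 0 ≤ t := by
    have := Nat.floor_le (le_trans zero_le_one hm)
    simp only [htdef]; linarith
  have ht1 : t ≤ 1 := by
    have := Nat.lt_floor_add_one m
    simp only [htdef]; linarith
  have hmnt : m = (n:ℝ) + t := by simp [htdef]
  have hm0 : (0:ℝ) < m := by linarith
  -- log-convexity of Gamma at m + 1 between n+1 and n+2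
  have hconv := Real.convexOn_log_Gamma.2 (show ((n:ℝ)+1) ∈ Set.Ioi (0:ℝ) by simp; linarith)
    (show ((n:ℝ)+2) ∈ Set.Ioi (0:ℝ) by simp; linarith)
    (by linarith : (0:ℝ) ≤ 1 - t) ht0 (by ring)
  have hcomb : (1-t) • ((n:ℝ)+1) + t • ((n:ℝ)+2) = m + 1 := by
    simp only [smul_eq_mul]; rw [hmnt]; ring
  rw [hcomb] at hconv
  simp only [Function.comp_apply, smul_eq_mul] at hconv
  -- Gamma at integer points
  have hg1 : Real.Gamma ((n:ℝ)+1) = Nat.factorial n := Real.Gamma_nat_eq_factorial n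
  have hg2 : Real.Gamma ((n:ℝ)+2) = Nat.factorial (n+1) := by
    have := Real.Gamma_nat_eq_factorial (n+1)
    rw [← this]; push_cast; ring_nf
  rw [hg1, hg2] at hconv
  have hf1 := fact_log_le' n hn1
  have hf2 := fact_log_le' (n+1) (by omega)
  have hd := defect' (n:ℝ) t hna ht0 ht1
  have hlog : Real.log (Real.Gamma (m+1)) ≤ 5/4 + (m + 1/2) * Real.log m - m := by
    push_cast at hf2
    calc Real.log (Real.Gamma (m+1)) ≤ (1-t) * Real.log (Nat.factorial n) + t * Real.log (Nat.factorial (n+1)) := hconv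
      _ ≤ (1-t) * (1 + ((n:ℝ) + 1/2) * Real.log n - n) + t * (1 + ((n:ℝ)+1 + 1/2) * Real.log ((n:ℝ)+1) - ((n:ℝ)+1)) := by
          push_cast
          gcongr <;> linarith
      _ = 1 - ((n:ℝ)+t) + ((1-t)*(((n:ℝ)+1/2)*Real.log n) + t*(((n:ℝ)+1+1/2)*Real.log ((n:ℝ)+1))) := by ring
      _ ≤ 1 - ((n:ℝ)+t) + (((n:ℝ)+t+1/2)*Real.log ((n:ℝ)+t) + 1/4) := by linarith
      _ = 5/4 + (m + 1/2) * Real.log m - m := by rw [hmnt]; ring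
  have hgpos : 0 < Real.Gamma (m+1) := Real.Gamma_pos_of_pos (by linarith)
  have hG1 : Real.Gamma (m+1) ≤ Real.exp (5/4 + (m + 1/2) * Real.log m - m) := by
    calc Real.Gamma (m+1) = Real.exp (Real.log (Real.Gamma (m+1))) := (Real.exp_log hgpos).symm
      _ ≤ _ := Real.exp_le_exp.mpr hlog
  have hadd : Real.Gamma (m+1) = m * Real.Gamma m := Real.Gamma_add_one (ne_of_gt hm0)
  rw [hadd] at hG1
  have : Real.Gamma m ≤ Real.exp (5/4 + (m + 1/2) * Real.log m - m) / m := by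
    rw [le_div_iff₀ hm0]; linarith [hG1]
  calc Real.Gamma m ≤ Real.exp (5/4 + (m + 1/2) * Real.log m - m) / m := this
    _ = Real.exp (5/4 + (m - 1/2) * Real.log m - m) := by
        rw [eq_comm, eq_div_iff (ne_of_gt hm0)]
        rw [← Real.exp_log hm0, ← Real.exp_add]
        congr 1
        rw [Real.exp_log hm0]
        ring

/-- For integers `k ≥ 2` and `ℓ ≥ 1`,
`I_{k,ℓ} = (1/3)·6^{k/3+(ℓ−1)/2}·Γ(k/3+(ℓ−1)/2)
  ≤ 2√π · (3ℓ)^{k/3−1} · (3ℓ/e)^{ℓ/2} · e^{2k²/(9ℓ)}`. -/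
theorem I_kl_bound (k l : ℕ) (hk : 2 ≤ k) (hl : 1 ≤ l) :
    (1 / 3) * (6 : ℝ) ^ ((k : ℝ) / 3 + ((l : ℝ) - 1) / 2)
        * Real.Gamma ((k : ℝ) / 3 + ((l : ℝ) - 1) / 2)
      ≤ 2 * Real.sqrt Real.pi * (3 * (l : ℝ)) ^ ((k : ℝ) / 3 - 1)
          * (3 * (l : ℝ) / Real.exp 1) ^ ((l : ℝ) / 2)
          * Real.exp (2 * (k : ℝ) ^ 2 / (9 * (l : ℝ))) := by
  by_cases hsp : k = 2 ∧ l = 1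
  · -- special case k = 2, l = 1
    obtain ⟨rfl, rfl⟩ := hsp
    norm_num
    have hG53 : Real.Gamma (5/3) ≤ 1 := by
      have h := Real.convexOn_log_Gamma.2 (show (1:ℝ) ∈ Set.Ioi (0:ℝ) by norm_num)
        (show (2:ℝ) ∈ Set.Ioi (0:ℝ) by norm_num)
        (by norm_num : (0:ℝ) ≤ 1/3) (by norm_num : (0:ℝ) ≤ 2/3) (by norm_num)
      simp only [smul_eq_mul, Function.comp_apply] at h
      rw [show (1:ℝ)/3 * 1 + 2/3 * 2 = 5/3 by norm_num, Real.Gamma_one, Real.Gamma_two,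
        Real.log_one] at h
      have hpos : 0 < Real.Gamma (5/3) := Real.Gamma_pos_of_pos (by norm_num)
      calc Real.Gamma (5/3) = Real.exp (Real.log (Real.Gamma (5/3))) := (Real.exp_log hpos).symm
        _ ≤ Real.exp 0 := Real.exp_le_exp.mpr (by linarith)
        _ = 1 := Real.exp_zero
    have hG23 : Real.Gamma (2/3) ≤ 3/2 := by
      have h := Real.Gamma_add_one (show (2/3:ℝ) ≠ 0 by norm_num)
      rw [show (2/3:ℝ) + 1 = 5/3 by norm_num] at h
      nlinarith [Real.Gamma_pos_of_pos (show (0:ℝ) < 2/3 by norm_num)]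
    have h6r : (6:ℝ) ^ ((2:ℝ)/3) ≤ 4 := by
      calc (6:ℝ) ^ ((2:ℝ)/3) ≤ (8:ℝ) ^ ((2:ℝ)/3) :=
            Real.rpow_le_rpow (by norm_num) (by norm_num) (by norm_num)
        _ = ((2:ℝ) ^ (3:ℕ)) ^ ((2:ℝ)/3) := by norm_num
        _ = (2:ℝ) ^ ((3:ℝ) * ((2:ℝ)/3)) := by
            rw [← Real.rpow_natCast 2 3, ← Real.rpow_mul (by norm_num)]
            norm_num
        _ = 4 := by
            rw [show (3:ℝ) * ((2:ℝ)/3) = 2 by norm_num]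
            rw [show (2:ℝ) = ((2:ℕ):ℝ) by norm_num, Real.rpow_natCast]
            norm_num
    have hsqrtpi : (1.7:ℝ) ≤ Real.sqrt π := by
      rw [show (1.7:ℝ) = Real.sqrt (1.7^2) by rw [Real.sqrt_sq (by norm_num)]]
      exact Real.sqrt_le_sqrt (by nlinarith [Real.pi_gt_three])
    have h3r : (1/2 : ℝ) ≤ (3:ℝ) ^ (-((1:ℝ)/3)) := by
      have h13 : (3:ℝ) ^ ((1:ℝ)/3) ≤ 2 := by
        calc (3:ℝ) ^ ((1:ℝ)/3) ≤ (8:ℝ) ^ ((1:ℝ)/3) :=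
              Real.rpow_le_rpow (by norm_num) (by norm_num) (by norm_num)
          _ = ((2:ℝ) ^ (3:ℕ)) ^ ((1:ℝ)/3) := by norm_num
          _ = (2:ℝ) ^ ((3:ℝ) * ((1:ℝ)/3)) := by
              rw [← Real.rpow_natCast 2 3, ← Real.rpow_mul (by norm_num)]
              norm_num
          _ = 2 := by
              rw [show (3:ℝ) * ((1:ℝ)/3) = 1 by norm_num, Real.rpow_one]
      have hpos : (0:ℝ) < (3:ℝ) ^ ((1:ℝ)/3) := Real.rpow_pos_of_pos (by norm_num) _
      rw [Real.rpow_neg (by norm_num)]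
      rw [le_inv_comm₀ (by norm_num) hpos]
      calc (3:ℝ) ^ ((1:ℝ)/3) ≤ 2 := h13
        _ = (1/2:ℝ)⁻¹ := by norm_num
    have her : (1:ℝ) ≤ (3 / Real.exp 1 : ℝ) ^ ((1:ℝ)/2) := by
      apply Real.one_le_rpow _ (by norm_num)
      rw [le_div_iff₀ (Real.exp_pos 1)]
      nlinarith [Real.exp_one_lt_d9]
    have hexp : (17/9 : ℝ) ≤ Real.exp (8/9) := by
      have := Real.add_one_le_exp (8/9 : ℝ)
      linarith
    have hGpos : 0 ≤ Real.Gamma (2/3) := (Real.Gamma_pos_of_pos (by norm_num)).le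
    calc (1/3 : ℝ) * 6 ^ ((2:ℝ)/3) * Real.Gamma (2/3)
        ≤ (1/3 : ℝ) * 4 * (3/2) := by
          apply mul_le_mul _ hG23 hGpos (by norm_num)
          apply mul_le_mul_of_nonneg_left h6r (by norm_num)
      _ ≤ 2 * (1.7:ℝ) * (1/2) * 1 * (17/9) := by norm_num
      _ ≤ 2 * Real.sqrt π * (3:ℝ) ^ (-((1:ℝ)/3)) * (3 / Real.exp 1) ^ ((1:ℝ)/2)
            * Real.exp (8/9) := by
          gcongr <;> norm_num [hsqrtpi]
      _ = 2 * √π * 3 ^ (-(1/3 : ℝ)) * (3 / rexp 1) ^ ((1:ℝ)/2) * rexp (8/9) := by norm_num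

  · have h9 : 9 ≤ 2*k + 3*l := by omega
    set K := (k:ℝ) with hKdef
    set L := (l:ℝ) with hLdef
    have hK : (2:ℝ) ≤ K := by rw [hKdef]; exact_mod_cast hk
    have hL : (1:ℝ) ≤ L := by rw [hLdef]; exact_mod_cast hl
    have h9R : (9:ℝ) ≤ 2*K + 3*L := by rw [hKdef, hLdef]; exact_mod_cast h9
    set m := K/3 + (L-1)/2 with hmdef
    have hm1 : (1:ℝ) ≤ m := by rw [hmdef]; linarith
    have hm0 : (0:ℝ) < m := by linarith
    have hL0 : (0:ℝ) < L := by linarith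
    have h3L : (0:ℝ) < 3*L := by linarith
    have hm12 : (0:ℝ) ≤ m - 1/2 := by linarith
    have h6 : Real.log 6 = Real.log 2 + Real.log 3 := by
      rw [show (6:ℝ) = 2*3 by norm_num, Real.log_mul (by norm_num) (by norm_num)]
    -- key inequality log(6m) ≤ log(3L) + (2K-3)/(3L)
    have hkey : Real.log 2 + Real.log 3 + Real.log m ≤ Real.log (3*L) + (2*K-3)/(3*L) := by
      have h1 : Real.log (6*m) - Real.log (3*L) ≤ 6*m/(3*L) - 1 := by
        have h2 := Real.log_le_sub_one_of_pos (show (0:ℝ) < 6*m/(3*L) by positivity)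
        rwa [Real.log_div (by positivity) (by positivity)] at h2
      have h2 : 6*m/(3*L) - 1 = (2*K-3)/(3*L) := by
        rw [hmdef]; field_simp; ring
      have h3 : Real.log (6*m) = Real.log 2 + Real.log 3 + Real.log m := by
        rw [Real.log_mul (by norm_num) hm0.ne', h6]
      linarith
    -- numeric: 5/2 ≤ log 2 + log 3 + log π
    have hnum : (5/2:ℝ) ≤ Real.log 2 + Real.log 3 + Real.log π := by
      have h6pi : Real.exp (5/2) ≤ 6*π := by
        have he : Real.exp 1 < 2.7182818286 := Real.exp_one_lt_d9
        have hp : (3:ℝ) < π := Real.pi_gt_three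
        have h1 : (Real.exp 1)^(5:ℕ) ≤ (2.7182818286:ℝ)^(5:ℕ) :=
          pow_le_pow_left₀ (Real.exp_pos 1).le he.le 5
        have h2 : ((2.7182818286:ℝ))^(5:ℕ) ≤ 149 := by norm_num
        have h3 : Real.exp 5 = (Real.exp 1)^(5:ℕ) := by
          rw [← Real.exp_nat_mul]; norm_num
        have hsq : Real.exp (5/2) * Real.exp (5/2) = Real.exp 5 := by
          rw [← Real.exp_add]; norm_num
        nlinarith [Real.exp_pos (5/2 : ℝ)]
      have h1 := Real.log_le_log (Real.exp_pos _) h6pi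
      rw [Real.log_exp, Real.log_mul (by norm_num) Real.pi_pos.ne', h6] at h1
      linarith
    have hGam := gamma_le m hm1
    have h13 : (1/3 : ℝ) = Real.exp (-Real.log 3) := by
      rw [Real.exp_neg, Real.exp_log (by norm_num : (0:ℝ) < 3)]
      norm_num
    have h2e : (2:ℝ) = Real.exp (Real.log 2) := by
      rw [Real.exp_log (by norm_num : (0:ℝ) < 2)]
    calc (1/3) * (6:ℝ) ^ m * Real.Gamma m
        = (1/3) * Real.exp (Real.log 6 * m) * Real.Gamma m := by
          rw [Real.rpow_def_of_pos (by norm_num)]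
      _ ≤ (1/3) * Real.exp (Real.log 6 * m) * Real.exp (5/4 + (m - 1/2) * Real.log m - m) := by
          gcongr
      _ = Real.exp (-Real.log 3 + Real.log 6 * m + (5/4 + (m - 1/2) * Real.log m - m)) := by
          rw [h13, ← Real.exp_add, ← Real.exp_add]
      _ ≤ Real.exp (Real.log 2 + (Real.log π * (1/2) + Real.log (3*L) * (K/3 - 1)
            + (Real.log (3*L) - 1) * (L/2) + 2*K^2/(9*L))) := by
          apply Real.exp_le_exp.mpr
          have e1 : (m - 1/2) * (Real.log 2 + Real.log 3 + Real.log m)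
              ≤ (m - 1/2) * (Real.log (3*L) + (2*K-3)/(3*L)) :=
            mul_le_mul_of_nonneg_left hkey hm12
          have e2 : (m - 1/2) * (Real.log (3*L) + (2*K-3)/(3*L))
              = Real.log (3*L) * (K/3 - 1) + Real.log (3*L) * (L/2)
                + 2*K^2/(9*L) + K/3 - K/L - 1/2 + 1/L := by
            rw [hmdef]; field_simp; ring
          have e3 : -Real.log 3 + Real.log 6 * m + (5/4 + (m - 1/2) * Real.log m - m)
              = (m - 1/2) * (Real.log 2 + Real.log 3 + Real.log m)
                + (Real.log 2 - Real.log 3)/2 + 5/4 - m := by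
            rw [h6]; ring
          have e5 : 1/L ≤ K/L := by gcongr; linarith
          linarith [e1, e2, e3, hnum, e5]
      _ = 2 * Real.exp (Real.log π * (1/2) + Real.log (3*L) * (K/3 - 1)
            + (Real.log (3*L) - 1) * (L/2) + 2*K^2/(9*L)) := by
          rw [Real.exp_add, Real.exp_log (by norm_num : (0:ℝ) < 2)]
      _ = 2 * Real.sqrt π * (3*L) ^ (K/3 - 1) * (3*L / Real.exp 1) ^ (L/2)
            * Real.exp (2*K^2/(9*L)) := by
          rw [Real.sqrt_eq_rpow, Real.rpow_def_of_pos Real.pi_pos,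
            Real.rpow_def_of_pos h3L,
            Real.rpow_def_of_pos (show (0:ℝ) < 3*L/Real.exp 1 by positivity),
            Real.log_div h3L.ne' (Real.exp_ne_zero 1), Real.log_exp]
          conv_rhs => rw [mul_assoc, mul_assoc, mul_assoc,
            ← Real.exp_add, ← Real.exp_add, ← Real.exp_add]
          congr 1
          rw [Real.exp_eq_exp]
          ring
end
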